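/- arXiv:1710.08825 — 2 statements merged into one kernel-verified Lean document; each statement's English description precedes it below -/
import Mathlib

section
/- Let T be a reflexive tournament on n vertices and let K be an irreflexive copy of T (an irreflexive tournament with the same vertices and non-loop arcs) appearing as a subgraph of an oriented graph G, where n ≥ 4. Then any ios-injective homomorphism f from G to T is injective on the vertices of K. -/
/-!
If two vertices of the copy `K` received the same colour, every third vertex of `K`, being joined
to both, would be forced to that colour too: two out-neighbours (or two in-neighbours) of one
vertex cannot share a colour, and an arc each way to a colour `c` pins the colour to `c` by
antisymmetry of `T`. So all of `K` is monochromatic; but a vertex of `K` has at least three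
neighbours in `K`, and two of them lie on the same side of it.
-/

structure IsIosInjective {V W : Type*} (A : V → V → Prop) (f : V → W) : Prop where
  in_inj : ∀ v u₁ u₂, A u₁ v → A u₂ v → f u₁ = f u₂ → u₁ = u₂
  out_inj : ∀ v u₁ u₂, A v u₁ → A v u₂ → f u₁ = f u₂ → u₁ = u₂

namespace IsIosInjective

variable {V W : Type*} {A : V → V → Prop} {f : V → W}

theorem apply_eq_of_apply_eq (hf : IsIosInjective A f) {B : W → W → Prop}
    (hhom : ∀ u v, A u v → B (f u) (f v)) (hB : ∀ a b, a ≠ b → ¬ (B a b ∧ B b a))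
    {u v w : V} (huv : u ≠ v) (hu : A w u ∨ A u w) (hv : A w v ∨ A v w) (h : f u = f v) :
    f w = f u := by
  rcases hu with hu | hu <;> rcases hv with hv | hv
  · exact absurd (hf.out_inj w u v hu hv h) huv
  · by_contra hne
    exact hB _ _ hne ⟨hhom _ _ hu, h ▸ hhom _ _ hv⟩
  · by_contra hne
    exact hB _ _ hne ⟨h ▸ hhom _ _ hv, hhom _ _ hu⟩
  · exact absurd (hf.in_inj w u v hu hv h) huv

theorem eq_or_eq_or_eq_of_adj (hf : IsIosInjective A f) {x y z w : V}
    (hy : A x y ∨ A y x) (hz : A x z ∨ A z x) (hw : A x w ∨ A w x)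
    (hyz : f y = f z) (hzw : f z = f w) : y = z ∨ y = w ∨ z = w := by
  rcases hy with hy | hy <;> rcases hz with hz | hz
  · exact .inl (hf.out_inj x y z hy hz hyz)
  · rcases hw with hw | hw
    · exact .inr (.inl (hf.out_inj x y w hy hw (hyz.trans hzw)))
    · exact .inr (.inr (hf.in_inj x z w hz hw hzw))
  · rcases hw with hw | hw
    · exact .inr (.inr (hf.out_inj x z w hz hw hzw))
    · exact .inr (.inl (hf.in_inj x y w hy hw (hyz.trans hzw)))
  · exact .inl (hf.in_inj x y z hy hz hyz)

end IsIosInjective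

theorem ios_injective_on_tournament_copy_general {V W : Type*} [Fintype W]
    (A : V → V → Prop) (B : W → W → Prop)
    (hB_total : ∀ u v : W, B u v ∨ B v u)
    (hB_anti : ∀ u v : W, u ≠ v → ¬ (B u v ∧ B v u))
    (hcard : 4 ≤ Fintype.card W)
    (ι : W → V) (hι : Function.Injective ι)
    (hcopy : ∀ u v : W, u ≠ v → B u v → A (ι u) (ι v))
    (f : V → W)
    (hhom : ∀ u v : V, A u v → B (f u) (f v))
    (h_in : ∀ v u₁ u₂ : V, A u₁ v → A u₂ v → f u₁ = f u₂ → u₁ = u₂)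
    (h_out : ∀ v u₁ u₂ : V, A v u₁ → A v u₂ → f u₁ = f u₂ → u₁ = u₂) :
    Function.Injective (fun u : W => f (ι u)) := by
  classical
  have hf : IsIosInjective A f := ⟨h_in, h_out⟩
  have hK : ∀ u v : W, u ≠ v → A (ι u) (ι v) ∨ A (ι v) (ι u) := fun u v huv =>
    (hB_total u v).imp (hcopy u v huv) (hcopy v u huv.symm)
  intro x y hfxy
  by_contra hxy
  have hmono : ∀ z, z ≠ x → z ≠ y → f (ι z) = f (ι x) := fun z hzx hzy =>
    hf.apply_eq_of_apply_eq hhom hB_anti (hι.ne hxy) (hK z x hzx) (hK z y hzy) hfxy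
  obtain ⟨z, hz, w, hw, hzw⟩ : ∃ z ∈ ({x, y}ᶜ : Finset W), ∃ w ∈ ({x, y}ᶜ : Finset W), z ≠ w := by
    apply Finset.one_lt_card.1
    rw [Finset.card_compl, Finset.card_pair hxy]
    omega
  simp only [Finset.mem_compl, Finset.mem_insert, Finset.mem_singleton, not_or] at hz hw
  have hfz := hmono z hz.1 hz.2
  have hfw := hmono w hw.1 hw.2
  rcases hf.eq_or_eq_or_eq_of_adj (hK x y hxy) (hK x z (Ne.symm hz.1)) (hK x w (Ne.symm hw.1))
      (hfxy.symm.trans hfz.symm) (hfz.trans hfw.symm) with h | h | h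
  · exact hz.2 (hι h).symm
  · exact hw.2 (hι h).symm
  · exact hzw (hι h)

/-- Let `T` be a reflexive tournament on at least 4 vertices and let `K` be an
irreflexive copy of `T` (embedded via `ι`) inside an oriented graph `G`.
Then any ios-injective homomorphism `f : G → T` is injective on the vertices
of `K`. -/
theorem ios_injective_on_tournament_copy {V W : Type*} [Fintype W]
    (A : V → V → Prop) (B : W → W → Prop)
    (hG_irrefl : ∀ v : V, ¬ A v v)
    (hG_oriented : ∀ u v : V, A u v → ¬ A v u)
    (hB_refl : ∀ w : W, B w w)
    (hB_total : ∀ u v : W, B u v ∨ B v u)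
    (hB_anti : ∀ u v : W, u ≠ v → ¬ (B u v ∧ B v u))
    (hcard : 4 ≤ Fintype.card W)
    (ι : W → V) (hι : Function.Injective ι)
    (hcopy : ∀ u v : W, u ≠ v → B u v → A (ι u) (ι v))
    (f : V → W)
    (hhom : ∀ u v : V, A u v → B (f u) (f v))
    (h_in : ∀ v u₁ u₂ : V, A u₁ v → A u₂ v → f u₁ = f u₂ → u₁ = u₂)
    (h_out : ∀ v u₁ u₂ : V, A v u₁ → A v u₂ → f u₁ = f u₂ → u₁ = u₂) :
    Function.Injective (fun u : W => f (ι u)) :=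
  ios_injective_on_tournament_copy_general A B hB_total hB_anti hcard ι hι hcopy f hhom h_in h_out
end

section
/- Let T be a reflexive tournament with |V(T)| = n ≥ 4, let K be an irreflexive copy of T inside an oriented graph G, and let v_K denote the vertex of K corresponding to a vertex v of T. Suppose x is a vertex of G outside K with an arc from v_K to x. Then in any ios-injective homomorphism f of G to T with f(v_K) = v, necessarily f(x) = v, i.e., f(x) = f(v_K). -/
/-- Let `T` be a reflexive tournament on at least 4 vertices and let `K` be an
irreflexive copy of `T` (embedded via `ι`) inside an oriented graph `G`.
Let `x` be a vertex of `G` outside `K` with an arc from `ι v` to `x`.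
Then in any ios-injective homomorphism `f : G → T` with `f (ι v) = v`,
necessarily `f x = f (ι v)` (that is, `f x = v`). -/
theorem ios_injective_external_out_neighbour_same_colour {V W : Type*} [Fintype W]
    (A : V → V → Prop) (B : W → W → Prop)
    (hG_irrefl : ∀ v : V, ¬ A v v)
    (hG_oriented : ∀ u v : V, A u v → ¬ A v u)
    (hB_refl : ∀ w : W, B w w)
    (hB_total : ∀ u v : W, B u v ∨ B v u)
    (hB_anti : ∀ u v : W, u ≠ v → ¬ (B u v ∧ B v u))
    (hcard : 4 ≤ Fintype.card W)
    (ι : W → V) (hι : Function.Injective ι)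
    (hcopy : ∀ u v : W, u ≠ v → B u v → A (ι u) (ι v))
    (f : V → W)
    (hhom : ∀ u v : V, A u v → B (f u) (f v))
    (h_in : ∀ v u₁ u₂ : V, A u₁ v → A u₂ v → f u₁ = f u₂ → u₁ = u₂)
    (h_out : ∀ v u₁ u₂ : V, A v u₁ → A v u₂ → f u₁ = f u₂ → u₁ = u₂)
    (v : W) (hfv : f (ι v) = v)
    (x : V) (hx_out : x ∉ Set.range ι) (harc : A (ι v) x) :
    f x = f (ι v) := by
  classical
  -- key: f ∘ ι is injective
  have key : ∀ u u' : W, u ≠ u' → B u u' → f (ι u) = f (ι u') → False := by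
    intro u u' hne hB hgeq
    have harc0 : A (ι u) (ι u') := hcopy u u' hne hB
    have hval : ∀ t : W, t ≠ u → t ≠ u' →
        A (ι u') (ι t) ∧ f (ι t) = f (ι u) := by
      intro t htu htu'
      rcases hB_total t u with h1 | h1
      · rcases hB_total t u' with h2 | h2
        · -- common in-neighbourhood of ι t
          exact absurd (hι (h_out (ι t) (ι u) (ι u')
            (hcopy t u htu h1) (hcopy t u' htu' h2) hgeq)) hne
        · -- case A: t→u, u'→t
          have harcA : A (ι u') (ι t) := hcopy u' t (Ne.symm htu') h2
          have harcB : A (ι t) (ι u) := hcopy t u htu h1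
          have hb1 : B (f (ι t)) (f (ι u)) := hhom _ _ harcB
          have hb2 : B (f (ι u)) (f (ι t)) := by
            have := hhom _ _ harcA
            rwa [← hgeq] at this
          have hgt : f (ι t) = f (ι u) := by
            by_contra hne'
            exact hB_anti _ _ hne' ⟨hb1, hb2⟩
          exact ⟨harcA, hgt⟩
      · rcases hB_total t u' with h2 | h2
        · -- case B: u→t, t→u'
          have harcA : A (ι u) (ι t) := hcopy u t (Ne.symm htu) h1
          have harcB : A (ι t) (ι u') := hcopy t u' htu' h2
          have hb1 : B (f (ι u)) (f (ι t)) := hhom _ _ harcA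
          have hb2 : B (f (ι t)) (f (ι u)) := by
            have := hhom _ _ harcB
            rwa [← hgeq] at this
          have hgt : f (ι t) = f (ι u) := by
            by_contra hne'
            exact hB_anti _ _ hne' ⟨hb2, hb1⟩
          have := hι (h_in (ι u') (ι u) (ι t) harc0 harcB (hgt.symm))
          exact absurd this.symm htu
        · -- common out-neighbourhood of ι t
          exact absurd (hι (h_in (ι t) (ι u) (ι u')
            (hcopy u t (Ne.symm htu) h1) (hcopy u' t (Ne.symm htu') h2) hgeq)) hne
    -- find two further vertices
    have hcard2 : 1 < (Finset.univ \ {u, u'} : Finset W).card := by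
      have h1 : ({u, u'} : Finset W).card ≤ 2 := by
        apply le_trans (Finset.card_insert_le _ _)
        simp
      have h2 : ({u, u'} : Finset W) ⊆ Finset.univ := Finset.subset_univ _
      rw [Finset.card_sdiff_of_subset h2, Finset.card_univ]
      omega
    obtain ⟨t1, ht1, t2, ht2, hne12⟩ := Finset.one_lt_card.mp hcard2
    simp only [Finset.mem_sdiff, Finset.mem_univ, Finset.mem_insert,
      Finset.mem_singleton, true_and, not_or] at ht1 ht2
    obtain ⟨ha1, hg1⟩ := hval t1 ht1.1 ht1.2
    obtain ⟨ha2, hg2⟩ := hval t2 ht2.1 ht2.2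
    exact hne12 (hι (h_out (ι u') (ι t1) (ι t2) ha1 ha2 (hg1.trans hg2.symm)))
  have ginj : Function.Injective (fun w => f (ι w)) := by
    intro a b hab
    by_contra hne
    rcases hB_total a b with h | h
    · exact key a b hne h hab
    · exact key b a (Ne.symm hne) h hab.symm
  have gsurj : Function.Surjective (fun w => f (ι w)) :=
    Finite.injective_iff_surjective.mp ginj
  -- main argument
  by_contra hne0
  have hBvfx : B v (f x) := by
    have := hhom _ _ harc
    rwa [hfv] at this
  have hfxv : f x ≠ v := by rw [hfv] at hne0; exact hne0
  obtain ⟨w', hw'⟩ := gsurj (f x)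
  simp only at hw'
  have hw'v : w' ≠ v := by
    intro h
    rw [h, hfv] at hw'
    exact hfxv hw'.symm
  have harc2 : A (ι v) (ι w') := by
    rcases hB_total v w' with h | h
    · exact hcopy v w' (Ne.symm hw'v) h
    · exfalso
      have := hhom _ _ (hcopy w' v hw'v h)
      rw [hw', hfv] at this
      exact hB_anti v (f x) (Ne.symm hfxv) ⟨hBvfx, this⟩
  have hx_eq : x = ι w' := h_out (ι v) x (ι w') harc harc2 hw'.symm
  exact hx_out ⟨w', hx_eq.symm⟩
end
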